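/- Let φ = (1+λ)^2 + (1−λ)^2|ξ|^2 and f(ξ,λ) = (4λξ + (1+|ξ|^2)(λ^2−1)∂_1)/φ for ξ in the closed unit disk of R^n and λ ≥ 1. Then |f(ξ,λ)| ≤ 1, with |f| = 1 exactly when |ξ| = 1, i.e. f maps D^n × [1,∞) into the closed unit ball with boundary points corresponding to |ξ| = 1. -/

import Mathlib

/-! The squared norm of the Moebius coordinates equals `1 - 4λ(1 - |ξ|²)/φ`, a polynomial identity
in `t = |ξ|²` and `λ`. Since `φ > 0`, the defect `4λ(1 - t)/φ` is nonnegative for `t ≤ 1` and vanishes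
exactly at `t = 1`. -/

lemma moebius_numerator_eq (t lam : ℝ) :
    16 * lam ^ 2 * t + (1 + t) ^ 2 * (lam ^ 2 - 1) ^ 2
      = ((1 + lam) ^ 2 + (1 - lam) ^ 2 * t) ^ 2
        - 4 * lam * (1 - t) * ((1 + lam) ^ 2 + (1 - lam) ^ 2 * t) := by
  ring

lemma moebius_denom_pos {t lam : ℝ} (ht : 0 ≤ t) (hlam : 0 < lam) :
    0 < (1 + lam) ^ 2 + (1 - lam) ^ 2 * t := by
  positivity

lemma moebius_ratio_eq {t lam : ℝ} (ht : 0 ≤ t) (hlam : 0 < lam) :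
    (16 * lam ^ 2 * t + (1 + t) ^ 2 * (lam ^ 2 - 1) ^ 2) / ((1 + lam) ^ 2 + (1 - lam) ^ 2 * t) ^ 2
      = 1 - 4 * lam * (1 - t) / ((1 + lam) ^ 2 + (1 - lam) ^ 2 * t) := by
  have hφ := (moebius_denom_pos ht hlam).ne'
  rw [moebius_numerator_eq]
  field_simp

lemma moebius_ratio_le_one_and_eq_one_iff {t lam : ℝ} (ht₀ : 0 ≤ t) (ht₁ : t ≤ 1) (hlam : 0 < lam) :
    (16 * lam ^ 2 * t + (1 + t) ^ 2 * (lam ^ 2 - 1) ^ 2) / ((1 + lam) ^ 2 + (1 - lam) ^ 2 * t) ^ 2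
        ≤ 1 ∧
      ((16 * lam ^ 2 * t + (1 + t) ^ 2 * (lam ^ 2 - 1) ^ 2)
          / ((1 + lam) ^ 2 + (1 - lam) ^ 2 * t) ^ 2 = 1 ↔ t = 1) := by
  have hφ := moebius_denom_pos ht₀ hlam
  have hdefect : 0 ≤ 4 * lam * (1 - t) / ((1 + lam) ^ 2 + (1 - lam) ^ 2 * t) := by
    have : 0 ≤ 1 - t := sub_nonneg.mpr ht₁
    positivity
  rw [moebius_ratio_eq ht₀ hlam, sub_eq_self, div_eq_zero_iff, mul_eq_zero, mul_eq_zero,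
    sub_eq_zero, eq_comm (a := 1)]
  refine ⟨by linarith, ?_⟩
  simp only [hlam.ne', hφ.ne', four_ne_zero, false_or, or_false]

/-- Moebius coordinates: with `φ = (1+λ)² + (1−λ)²|ξ|²` and
`f(ξ,λ) = (4λξ + (1+|ξ|²)(λ²−1)∂₁)/φ` (so that
`|f|² = (16λ²|ξ|² + (1+|ξ|²)²(λ²−1)²)/φ²`, since `ξ ⊥ ∂₁`), for `ξ` in the
closed unit disk and `λ ≥ 1` one has `|f| ≤ 1`, with `|f| = 1` iff
`|ξ| = 1`. -/
theorem moebius_maps_into_ball (n : ℕ) (ξ : EuclideanSpace ℝ (Fin n))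
    (hξ : ‖ξ‖ ≤ 1) (lam : ℝ) (hlam : 1 ≤ lam)
    (φ normf2 : ℝ)
    (hφ : φ = (1 + lam) ^ 2 + (1 - lam) ^ 2 * ‖ξ‖ ^ 2)
    (hf : normf2 = (16 * lam ^ 2 * ‖ξ‖ ^ 2
      + (1 + ‖ξ‖ ^ 2) ^ 2 * (lam ^ 2 - 1) ^ 2) / φ ^ 2) :
    normf2 ≤ 1 ∧ (normf2 = 1 ↔ ‖ξ‖ = 1) := by
  subst hφ hf
  have hnorm := norm_nonneg ξ
  rw [← pow_eq_one_iff_of_nonneg hnorm two_ne_zero]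
  exact moebius_ratio_le_one_and_eq_one_iff (by positivity) (pow_le_one₀ hnorm hξ)
    (by linarith)
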